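/- arXiv:1403.4324 — 2 statements merged into one kernel-verified Lean document; each statement's English description precedes it below -/
import Mathlib

section
/- Let Λ = lim(Λ_n, p_n) be the (k+1)-graph associated to a covering sequence of k-graphs, let A be an abelian group, and let c' ∈ Z²(Λ, A) satisfy c'(λ,μ) = 0 whenever λ ∈ Λ^{ℕe_{k+1}} or μ ∈ Λ^{ℕe_{k+1}}. Then for every n ≥ 1, all composable λ, μ ∈ Λ_n, and all α, β ∈ Λ^{ℕe_{k+1}} with s(α) = r(λ) and r(β) = s(μ), one has c'(αλ, μβ) = c'(λ,μ). -/
open scoped BigOperators NNReal ENNReal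

/-- A `k`-graph: a countable small category presented on its set of morphisms,
with a range map, a source map, a (total, junk-valued on non-composable pairs)
composition, and a degree functor into `ℕ^k` satisfying the factorisation
property. -/
structure KGraph (k : ℕ) where
  M : Type
  countableM : Countable M
  nonemptyM : Nonempty M
  src : M → M
  rng : M → M
  comp : M → M → M
  deg : M → Fin k → ℕ
  src_src : ∀ x, src (src x) = src x
  rng_src : ∀ x, rng (src x) = src x
  src_rng : ∀ x, src (rng x) = rng x
  rng_rng : ∀ x, rng (rng x) = rng x
  comp_id : ∀ x, comp x (src x) = x
  id_comp : ∀ x, comp (rng x) x = x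
  src_comp : ∀ x y, src x = rng y → src (comp x y) = src y
  rng_comp : ∀ x y, src x = rng y → rng (comp x y) = rng x
  comp_assoc : ∀ x y z, src x = rng y → src y = rng z →
    comp (comp x y) z = comp x (comp y z)
  deg_src : ∀ x, deg (src x) = 0
  deg_rng : ∀ x, deg (rng x) = 0
  deg_comp : ∀ x y, src x = rng y → deg (comp x y) = deg x + deg y
  factor : ∀ (x : M) (m n : Fin k → ℕ), deg x = m + n →
    ∃! p : M × M, src p.1 = rng p.2 ∧ comp p.1 p.2 = x ∧ deg p.1 = m ∧ deg p.2 = n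

namespace KGraph

variable {k : ℕ} (Λ : KGraph k)

/-- The vertices (identity morphisms) of a `k`-graph. -/
def IsVertex (v : Λ.M) : Prop := Λ.rng v = v

/-- `Composable x y` means the composition `x ∘ y` (i.e. the path `xy`) is defined. -/
def Composable (x y : Λ.M) : Prop := Λ.src x = Λ.rng y

/-- The type of vertices of `Λ`. -/
def Vtx := {v : Λ.M // Λ.IsVertex v}

theorem isVertex_src (x : Λ.M) : Λ.IsVertex (Λ.src x) := Λ.rng_src x

theorem isVertex_rng (x : Λ.M) : Λ.IsVertex (Λ.rng x) := Λ.rng_rng x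

/-- The source of a morphism, as a vertex. -/
def srcV (x : Λ.M) : Λ.Vtx := ⟨Λ.src x, Λ.isVertex_src x⟩

/-- The set `vΛ^{≤ n}`. -/
def leSet (v : Λ.M) (n : Fin k → ℕ) : Set Λ.M :=
  {x | Λ.rng x = v ∧ Λ.deg x ≤ n ∧
    ∀ i : Fin k, Λ.deg x + Pi.single i 1 ≤ n →
      ¬∃ y, Λ.rng y = Λ.src x ∧ Λ.deg y = Pi.single i 1}

/-- A `k`-graph is row-finite if `vΛ^n` is finite for every vertex `v` and `n ∈ ℕ^k`. -/
def RowFinite : Prop :=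
  ∀ (v : Λ.M) (n : Fin k → ℕ), Λ.IsVertex v → {x | Λ.rng x = v ∧ Λ.deg x = n}.Finite

/-- A `k`-graph is locally convex if whenever `i < j`, `e ∈ Λ^{e_i}`, `f ∈ Λ^{e_j}` and
`r e = r f`, both `e` and `f` extend to paths of degree `e_i + e_j`. -/
def LocallyConvex : Prop :=
  ∀ (i j : Fin k), i < j → ∀ e f : Λ.M,
    Λ.deg e = Pi.single i 1 → Λ.deg f = Pi.single j 1 → Λ.rng e = Λ.rng f →
    (∃ e', Λ.Composable e e' ∧ Λ.deg e' = Pi.single j 1) ∧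
    (∃ f', Λ.Composable f f' ∧ Λ.deg f' = Pi.single i 1)

/-- `Λ^{min}(x,y)`: the pairs `(α, β)` with `xα = yβ` of degree `d x ⊔ d y`. -/
def MinExt (x y : Λ.M) : Set (Λ.M × Λ.M) :=
  {p | Λ.Composable x p.1 ∧ Λ.Composable y p.2 ∧
    Λ.comp x p.1 = Λ.comp y p.2 ∧ Λ.deg (Λ.comp x p.1) = Λ.deg x ⊔ Λ.deg y}

/-- A subset `E ⊆ vΛ` is exhaustive if every `x ∈ vΛ` has a minimal common extension
with some element of `E`. -/
def Exhaustive (v : Λ.M) (E : Set Λ.M) : Prop :=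
  ∀ x, Λ.rng x = v → ∃ μ ∈ E, (Λ.MinExt x μ).Nonempty

/-- A graph trace on `Λ`. -/
def IsGraphTrace (g : Λ.Vtx → ℝ≥0) : Prop :=
  ∀ (v : Λ.Vtx) (n : Fin k → ℕ), g v = ∑ᶠ x ∈ Λ.leSet v.1 n, g (Λ.srcV x)

/-- A `𝕋`-valued `2`-cocycle on `Λ`, presented as a `ℂ`-valued function that is
unimodular on composable pairs. -/
def IsTCocycle (c : Λ.M → Λ.M → ℂ) : Prop :=
  (∀ x y, Λ.Composable x y → ‖c x y‖ = 1) ∧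
  (∀ x y, Λ.IsVertex x ∨ Λ.IsVertex y → c x y = 1) ∧
  (∀ x y z, Λ.Composable x y → Λ.Composable y z →
    c x y * c (Λ.comp x y) z = c y z * c x (Λ.comp y z))

/-- A Cuntz–Krieger `(Λ, c)`-family in a `C*`-algebra `B`: relations (CK1)–(CK4). -/
def IsCKFamily {B : Type*} [NonUnitalCStarAlgebra B] [NormedSpace ℂ B]
    (c : Λ.M → Λ.M → ℂ) (s : Λ.M → B) : Prop :=
  (∀ v, Λ.IsVertex v → star (s v) = s v ∧ s v * s v = s v) ∧
  (∀ v w, Λ.IsVertex v → Λ.IsVertex w → v ≠ w → s v * s w = 0) ∧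
  (∀ x y, Λ.Composable x y → s x * s y = c x y • s (Λ.comp x y)) ∧
  (∀ x, star (s x) * s x = s (Λ.src x)) ∧
  (∀ (v : Λ.M) (n : Fin k → ℕ), Λ.IsVertex v →
    s v = ∑ᶠ x ∈ Λ.leSet v n, s x * star (s x))

end KGraph
attribute [local instance] Classical.propDecidable

namespace KGraph

variable {k : ℕ}

/-- An `A`-valued (categorical) `2`-cocycle on a `k`-graph, encoded as a total
function that vanishes on non-composable pairs and on pairs involving an
identity morphism, and satisfies the cocycle identity on composable triples. -/
def IsCocycle2 (Λ : KGraph k) {A : Type*} [AddCommGroup A] (c : Λ.M → Λ.M → A) : Prop :=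
  (∀ x y, ¬Λ.Composable x y → c x y = 0) ∧
  (∀ x y, Λ.IsVertex x ∨ Λ.IsVertex y → c x y = 0) ∧
  (∀ x y z, Λ.Composable x y → Λ.Composable y z →
    c x y + c (Λ.comp x y) z = c y z + c x (Λ.comp y z))

/-- The group `Z²(Λ, A)` of `A`-valued `2`-cocycles on `Λ`. -/
def Z2 (Λ : KGraph k) (A : Type*) [AddCommGroup A] : AddSubgroup (Λ.M → Λ.M → A) where
  carrier := {c | Λ.IsCocycle2 c}
  zero_mem' := by
    refine ⟨fun _ _ _ => rfl, fun _ _ _ => rfl, fun _ _ _ _ _ => rfl⟩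
  add_mem' := by
    rintro c d ⟨hc1, hc2, hc3⟩ ⟨hd1, hd2, hd3⟩
    refine ⟨fun x y h => ?_, fun x y h => ?_, fun x y z h1 h2 => ?_⟩
    · simp [hc1 x y h, hd1 x y h]
    · simp [hc2 x y h, hd2 x y h]
    · simp only [Pi.add_apply]
      rw [add_add_add_comm, hc3 x y z h1 h2, hd3 x y z h1 h2, add_add_add_comm]
  neg_mem' := by
    rintro c ⟨hc1, hc2, hc3⟩
    refine ⟨fun x y h => ?_, fun x y h => ?_, fun x y z h1 h2 => ?_⟩
    · simp [hc1 x y h]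
    · simp [hc2 x y h]
    · simp only [Pi.neg_apply]
      rw [← neg_add, ← neg_add, hc3 x y z h1 h2]

/-- A `1`-cochain: a function on morphisms vanishing on the identity morphisms. -/
def IsCochain1 (Λ : KGraph k) {A : Type*} [AddCommGroup A] (b : Λ.M → A) : Prop :=
  ∀ v, Λ.IsVertex v → b v = 0

/-- The coboundary `δ¹ b` of a `1`-cochain `b`. -/
noncomputable def delta1 (Λ : KGraph k) {A : Type*} [AddCommGroup A] (b : Λ.M → A) :
    Λ.M → Λ.M → A :=
  fun x y => if Λ.Composable x y then b x + b y - b (Λ.comp x y) else 0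

/-- The group `B²(Λ, A)` of `A`-valued `2`-coboundaries on `Λ`. -/
noncomputable def B2 (Λ : KGraph k) (A : Type*) [AddCommGroup A] :
    AddSubgroup (Λ.M → Λ.M → A) where
  carrier := {c | ∃ b, Λ.IsCochain1 b ∧ c = Λ.delta1 b}
  zero_mem' := ⟨0, fun _ _ => rfl, by
    funext x y
    simp [delta1]⟩
  add_mem' := by
    rintro c d ⟨b, hb, rfl⟩ ⟨b', hb', rfl⟩
    refine ⟨b + b', fun v hv => by simp [hb v hv, hb' v hv], ?_⟩
    funext x y
    simp only [Pi.add_apply, delta1]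
    split <;> [abel; simp]
  neg_mem' := by
    rintro c ⟨b, hb, rfl⟩
    refine ⟨-b, fun v hv => by simp [hb v hv], ?_⟩
    funext x y
    simp only [Pi.neg_apply, delta1]
    split <;> [abel; simp]

/-- The second (categorical) cohomology group `H²(Λ, A) = Z²(Λ,A)/B²(Λ,A)`. -/
noncomputable def H2 (Λ : KGraph k) (A : Type*) [AddCommGroup A] :=
  Z2 Λ A ⧸ (B2 Λ A).addSubgroupOf (Z2 Λ A)

noncomputable instance (Λ : KGraph k) (A : Type*) [AddCommGroup A] :
    AddCommGroup (H2 Λ A) := by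
  unfold H2; infer_instance

/-- A covering of `k`-graphs: a surjective degree-preserving functor that restricts to
bijections `Γv → Λ p(v)` and `vΓ → p(v)Λ` on every vertex `v`. -/
def IsKGraphCovering (Γ Λ : KGraph k) (p : Γ.M → Λ.M) : Prop :=
  Function.Surjective p ∧
  (∀ x, Λ.src (p x) = p (Γ.src x)) ∧
  (∀ x, Λ.rng (p x) = p (Γ.rng x)) ∧
  (∀ x, Λ.deg (p x) = Γ.deg x) ∧
  (∀ x y, Γ.Composable x y → p (Γ.comp x y) = Λ.comp (p x) (p y)) ∧
  (∀ v, Γ.IsVertex v → Set.BijOn p {x | Γ.src x = v} {y | Λ.src y = p v}) ∧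
  (∀ v, Γ.IsVertex v → Set.BijOn p {x | Γ.rng x = v} {y | Λ.rng y = p v})

end KGraph

open KGraph

/-- The `(k+1)`-graph `Λ = lim (Λ_n, p_n)` associated to a covering sequence of
`k`-graphs, together with all its defining data: `L n` is the `k`-graph `Λ_{n+1}`
(so `L 0 = Λ₁`), `p n : Λ_{n+2} → Λ_{n+1}` are the coverings, `Lam` is the limit
`(k+1)`-graph, `ι n : Λ_{n+1} → Λ` are the injective functors, and `edge` is the
bijection of `⨆_{n ≥ 2} Λ_n^0` onto `Λ^{e_{k+1}}`, subject to the characterising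
properties (1)–(5). -/
structure CovSeqLimit (k : ℕ) where
  L : ℕ → KGraph k
  p : ∀ n, (L (n + 1)).M → (L n).M
  p_cov : ∀ n, IsKGraphCovering (L (n + 1)) (L n) (p n)
  Lam : KGraph (k + 1)
  ι : ∀ n, (L n).M → Lam.M
  ι_inj : ∀ n, Function.Injective (ι n)
  ι_src : ∀ n x, Lam.src (ι n x) = ι n ((L n).src x)
  ι_rng : ∀ n x, Lam.rng (ι n x) = ι n ((L n).rng x)
  ι_comp : ∀ n x y, (L n).Composable x y →
    Lam.comp (ι n x) (ι n y) = ι n ((L n).comp x y)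
  ι_deg : ∀ n x, Lam.deg (ι n x) = Fin.snoc ((L n).deg x) 0
  ι_disjoint : ∀ m n x y, ι m x = ι n y → m = n
  ι_union : ∀ z : Lam.M, Lam.deg z (Fin.last k) = 0 → ∃ n x, ι n x = z
  edge : (Σ n : ℕ, (L (n + 1)).M) → Lam.M
  edge_deg : ∀ q : Σ n, (L (n + 1)).M, (L (q.1 + 1)).IsVertex q.2 →
    Lam.deg (edge q) = Fin.snoc (fun _ : Fin k => 0) 1
  edge_injOn : Set.InjOn edge {q | (L (q.1 + 1)).IsVertex q.2}
  edge_surj : ∀ z : Lam.M, Lam.deg z = Fin.snoc (fun _ : Fin k => 0) 1 →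
    ∃ q, (L (q.1 + 1)).IsVertex q.2 ∧ edge q = z
  edge_src : ∀ (n) (v : (L (n + 1)).M), (L (n + 1)).IsVertex v →
    Lam.src (edge ⟨n, v⟩) = ι (n + 1) v
  edge_rng : ∀ (n) (v : (L (n + 1)).M), (L (n + 1)).IsVertex v →
    Lam.rng (edge ⟨n, v⟩) = ι n (p n v)
  edge_comm : ∀ (n) (x : (L (n + 1)).M),
    Lam.comp (edge ⟨n, (L (n + 1)).rng x⟩) (ι (n + 1) x) =
      Lam.comp (ι n (p n x)) (edge ⟨n, (L (n + 1)).src x⟩)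

namespace CovSeqLimit

variable {k : ℕ} (C : CovSeqLimit k)

/-- The iterated covering maps `p_{1,n} : Λ_n → Λ_1`. -/
def pIter : ∀ n, (C.L n).M → (C.L 0).M
  | 0 => id
  | n + 1 => pIter n ∘ C.p n

/-- A degree `d ∈ ℕ^{k+1}` lies in `ℕ e_{k+1}` iff its first `k` coordinates vanish. -/
def OnlyLast {k : ℕ} (d : Fin (k + 1) → ℕ) : Prop :=
  ∀ i : Fin k, d i.castSucc = 0

/-- The hypothesis that `ξ` assigns to each vertex `v` of `Λ` the path
`ξ_v ∈ Λ_1^0 Λ^{ℕ e_{k+1}} v`. -/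
def IsXi (ξ : C.Lam.M → C.Lam.M) : Prop :=
  ∀ v, C.Lam.IsVertex v → C.Lam.src (ξ v) = v ∧ OnlyLast (C.Lam.deg (ξ v)) ∧
    ∃ w, (C.L 0).IsVertex w ∧ C.Lam.rng (ξ v) = C.ι 0 w

/-- The hypothesis that `π : Λ → Λ₁` is the projection determined by the unique
factorisation `ξ_{r λ} λ = π(λ) β` with `π(λ) ∈ Λ₁` and `β ∈ Λ^{ℕ e_{k+1}}`. -/
def IsProjOnto (ξ : C.Lam.M → C.Lam.M) (π : C.Lam.M → (C.L 0).M) : Prop :=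
  ∀ x, ∃ β, OnlyLast (C.Lam.deg β) ∧ C.Lam.Composable (C.ι 0 (π x)) β ∧
    C.Lam.comp (ξ (C.Lam.rng x)) x = C.Lam.comp (C.ι 0 (π x)) β

/-- The map `π_* : Z²(Λ₁, A) → Z²(Λ, A)`, `π_* c (λ, μ) = c(π λ, π μ)`. -/
noncomputable def pfwd {A : Type*} [AddCommGroup A] (π : C.Lam.M → (C.L 0).M)
    (c : (C.L 0).M → (C.L 0).M → A) : C.Lam.M → C.Lam.M → A :=
  fun x y => if C.Lam.Composable x y then c (π x) (π y) else 0

/-- The restriction map `Z²(Λ, A) → Z²(Λ₁, A)`, `c ↦ c|_{Λ₁}`. -/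
def res {A : Type*} [AddCommGroup A] (c : C.Lam.M → C.Lam.M → A) :
    (C.L 0).M → (C.L 0).M → A :=
  fun x y => c (C.ι 0 x) (C.ι 0 y)

end CovSeqLimit

namespace KGraph

variable {k : ℕ} {Λ : KGraph k} {A : Type*} [AddCommGroup A] {c : Λ.M → Λ.M → A}

theorem IsCocycle2.apply_comp_left (hc : Λ.IsCocycle2 c) {a x y : Λ.M}
    (hax : Λ.Composable a x) (hxy : Λ.Composable x y)
    (ha : c a x = 0) (haxy : c a (Λ.comp x y) = 0) :
    c (Λ.comp a x) y = c x y := by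
  simpa [ha, haxy] using hc.2.2 a x y hax hxy

theorem IsCocycle2.apply_comp_right (hc : Λ.IsCocycle2 c) {x y b : Λ.M}
    (hxy : Λ.Composable x y) (hyb : Λ.Composable y b)
    (hb : c y b = 0) (hxyb : c (Λ.comp x y) b = 0) :
    c x (Λ.comp y b) = c x y := by
  simpa [hb, hxyb] using (hc.2.2 x y b hxy hyb).symm

theorem composable_comp_right {x y b : Λ.M} (hxy : Λ.Composable x y)
    (hyb : Λ.Composable y b) : Λ.Composable x (Λ.comp y b) :=
  hxy.trans (Λ.rng_comp y b hyb).symm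

end KGraph

namespace CovSeqLimit

variable {k : ℕ} (C : CovSeqLimit k)

theorem composable_ι {n : ℕ} {x y : (C.L n).M} (hxy : (C.L n).Composable x y) :
    C.Lam.Composable (C.ι n x) (C.ι n y) := by
  rw [Composable, C.ι_src, C.ι_rng, hxy]

end CovSeqLimit

open KGraph in
/-- If `c' ∈ Z²(Λ, A)` vanishes whenever either argument lies in
`Λ^{ℕ e_{k+1}}`, then `c'(αλ, μβ) = c'(λ, μ)` for all composable `λ, μ ∈ Λ_n` and all
`α, β ∈ Λ^{ℕ e_{k+1}}` with `s α = r λ` and `r β = s μ`. -/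
theorem cocycle_invariant_under_vertical_translation {k : ℕ} (C : CovSeqLimit k)
    (A : Type*) [AddCommGroup A]
    (c' : C.Lam.M → C.Lam.M → A) (hc' : c' ∈ Z2 C.Lam A)
    (hvanish : ∀ x y : C.Lam.M,
      CovSeqLimit.OnlyLast (C.Lam.deg x) ∨ CovSeqLimit.OnlyLast (C.Lam.deg y) →
        c' x y = 0) :
    ∀ (n : ℕ) (x y : (C.L n).M), (C.L n).Composable x y →
      ∀ α β : C.Lam.M,
        CovSeqLimit.OnlyLast (C.Lam.deg α) → CovSeqLimit.OnlyLast (C.Lam.deg β) →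
        C.Lam.src α = C.Lam.rng (C.ι n x) → C.Lam.rng β = C.Lam.src (C.ι n y) →
        c' (C.Lam.comp α (C.ι n x)) (C.Lam.comp (C.ι n y) β) =
          c' (C.ι n x) (C.ι n y) := by
  intro n x y hxy α β hα hβ hαx hyβ
  have hxy' := C.composable_ι hxy
  calc c' (C.Lam.comp α (C.ι n x)) (C.Lam.comp (C.ι n y) β)
      = c' (C.ι n x) (C.Lam.comp (C.ι n y) β) :=
        hc'.apply_comp_left hαx (composable_comp_right hxy' hyβ.symm)
          (hvanish _ _ (.inl hα)) (hvanish _ _ (.inl hα))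
    _ = c' (C.ι n x) (C.ι n y) :=
        hc'.apply_comp_right hxy' hyβ.symm (hvanish _ _ (.inr hβ)) (hvanish _ _ (.inr hβ))
end

section
/- Let Λ = lim(Λ_n, p_n) be the (k+1)-graph associated to a covering sequence of k-graphs and let A be an abelian group. Then the restriction map c ↦ c|_{Λ_1} from Z²(Λ, A) to Z²(Λ_1, A) maps B²(Λ, A) into B²(Λ_1, A) and induces a group isomorphism H²(Λ, A) ≅ H²(Λ_1, A). -/
open scoped BigOperators NNReal ENNReal

attribute [local instance] Classical.propDecidable

open KGraph

/-!
Every vertex `v` of `Λ` lies in some `Λ_n`, and the edges `e(w)` string together into a path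
`ξ_v` of degree `n e_{k+1}` from `v` down into `Λ₁`. Factorising `ξ_{r z} z = π(z) ξ_{s z}`
with `π(z) ∈ Λ₁` defines a functor `π : Λ → Λ₁` with `π ∘ ι₁ = id`, and `ξ` is a natural
transformation `id ⟹ ι₁ ∘ π`. Naturally isomorphic functors pull cocycles back to cohomologous
ones (the difference is the coboundary of `z ↦ c(ξ_{r z}, z) - c(π z, ξ_{s z})`), so
restriction along `ι₁` and pull-back along `π` are mutually inverse on `H²`.
-/

theorem Fin.snoc_add_snoc {n : ℕ} {M : Type*} [Add M] (a b : Fin n → M) (x y : M) :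
    (Fin.snoc a x + Fin.snoc b y : Fin (n + 1) → M) = Fin.snoc (a + b) (x + y) := by
  funext i
  refine Fin.lastCases ?_ (fun i => ?_) i <;> simp

theorem Fin.snoc_zero_zero {n : ℕ} {M : Type*} [Zero M] :
    (Fin.snoc 0 0 : Fin (n + 1) → M) = 0 := by
  funext i
  refine Fin.lastCases ?_ (fun i => ?_) i <;> simp

namespace KGraph

variable {k l : ℕ}

theorem IsVertex.src_eq {Λ : KGraph k} {v : Λ.M} (hv : Λ.IsVertex v) : Λ.src v = v := by
  rw [← hv, Λ.src_rng]

theorem isVertex_of_deg_eq_zero {Λ : KGraph k} {z : Λ.M} (hz : Λ.deg z = 0) :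
    Λ.IsVertex z := by
  obtain ⟨_, -, huniq⟩ := Λ.factor z 0 0 (by rw [hz, add_zero])
  have h₁ := huniq (z, Λ.src z) ⟨(Λ.rng_src z).symm, Λ.comp_id z, hz, Λ.deg_src z⟩
  have h₂ := huniq (Λ.rng z, z) ⟨Λ.src_rng z, Λ.id_comp z, Λ.deg_rng z, hz⟩
  exact (congrArg Prod.fst (h₁.trans h₂.symm)).symm

theorem composable_comp_left {Λ : KGraph k} {x y z : Λ.M} (hxy : Λ.Composable x y)
    (hyz : Λ.Composable y z) : Λ.Composable (Λ.comp x y) z :=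
  (Λ.src_comp x y hxy).trans hyz

theorem composable_comp_right_s9 {Λ : KGraph k} {x y z : Λ.M} (hxy : Λ.Composable x y)
    (hyz : Λ.Composable y z) : Λ.Composable x (Λ.comp y z) :=
  hxy.trans (Λ.rng_comp y z hyz).symm

theorem comp_right_cancel {Λ : KGraph k} {x y z : Λ.M} (hx : Λ.Composable x z)
    (hy : Λ.Composable y z) (h : Λ.comp x z = Λ.comp y z) : x = y := by
  have hdeg : Λ.deg x = Λ.deg y :=
    add_right_cancel ((Λ.deg_comp x z hx).symm.trans (h ▸ Λ.deg_comp y z hy))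
  obtain ⟨_, -, huniq⟩ := Λ.factor (Λ.comp x z) (Λ.deg x) (Λ.deg z) (Λ.deg_comp x z hx)
  have h₁ := huniq (x, z) ⟨hx, rfl, rfl, rfl⟩
  have h₂ := huniq (y, z) ⟨hy, h.symm, hdeg.symm, rfl⟩
  exact congrArg Prod.fst (h₁.trans h₂.symm)

structure IsFunctor (Γ : KGraph k) (Λ : KGraph l) (f : Γ.M → Λ.M) : Prop where
  map_src : ∀ x, Λ.src (f x) = f (Γ.src x)
  map_rng : ∀ x, Λ.rng (f x) = f (Γ.rng x)
  map_comp : ∀ x y, Γ.Composable x y → f (Γ.comp x y) = Λ.comp (f x) (f y)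

/-- `ξ : F ⟹ G`, with components `ξ v : F v → G v` indexed by the vertices `v`. -/
structure IsNatTrans (Γ : KGraph k) (Λ : KGraph l) (F G : Γ.M → Λ.M) (ξ : Γ.M → Λ.M) :
    Prop where
  src_app : ∀ v, Γ.IsVertex v → Λ.src (ξ v) = F v
  rng_app : ∀ v, Γ.IsVertex v → Λ.rng (ξ v) = G v
  naturality : ∀ z, Λ.comp (ξ (Γ.rng z)) (F z) = Λ.comp (G z) (ξ (Γ.src z))

namespace IsFunctor

variable {m : ℕ} {Γ : KGraph k} {Λ : KGraph l} {f : Γ.M → Λ.M}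

theorem id (Λ : KGraph k) : IsFunctor Λ Λ id := ⟨fun _ => rfl, fun _ => rfl, fun _ _ _ => rfl⟩

theorem isVertex (hf : IsFunctor Γ Λ f) {v : Γ.M} (hv : Γ.IsVertex v) : Λ.IsVertex (f v) :=
  (hf.map_rng v).trans (congrArg f hv)

theorem composable (hf : IsFunctor Γ Λ f) {x y : Γ.M} (h : Γ.Composable x y) :
    Λ.Composable (f x) (f y) := by
  rw [Composable, hf.map_src, hf.map_rng, h]

theorem comp {Δ : KGraph m} {g : Δ.M → Γ.M} (hf : IsFunctor Γ Λ f) (hg : IsFunctor Δ Γ g) :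
    IsFunctor Δ Λ (f ∘ g) where
  map_src x := by simp only [Function.comp, hf.map_src, hg.map_src]
  map_rng x := by simp only [Function.comp, hf.map_rng, hg.map_rng]
  map_comp x y h := by
    simp only [Function.comp, hg.map_comp x y h, hf.map_comp _ _ (hg.composable h)]

theorem composable_iff (hf : IsFunctor Γ Λ f) (hinj : Function.Injective f) {x y : Γ.M} :
    Λ.Composable (f x) (f y) ↔ Γ.Composable x y :=
  ⟨fun h => hinj (by rw [← hf.map_src, ← hf.map_rng]; exact h), hf.composable⟩

end IsFunctor

variable {Γ : KGraph k} {Λ : KGraph l} {A : Type*} [AddCommGroup A]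

/-- Pull-back of a `2`-cochain along `f`, kept zero off the composable pairs of `Γ`. -/
noncomputable def comap (f : Γ.M → Λ.M) (c : Λ.M → Λ.M → A) : Γ.M → Γ.M → A :=
  fun x y => if Γ.Composable x y then c (f x) (f y) else 0

theorem comap_eq_of_injective {f : Γ.M → Λ.M} (hf : IsFunctor Γ Λ f)
    (hinj : Function.Injective f) {c : Λ.M → Λ.M → A}
    (hc : ∀ x y, ¬Λ.Composable x y → c x y = 0) :
    comap f c = fun x y => c (f x) (f y) := by
  funext x y
  by_cases h : Γ.Composable x y
  · exact if_pos h
  · rw [comap, if_neg h, hc _ _ ((hf.composable_iff hinj).not.mpr h)]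

theorem comap_mem_Z2 {f : Γ.M → Λ.M} (hf : IsFunctor Γ Λ f) {c : Λ.M → Λ.M → A}
    (hc : c ∈ Z2 Λ A) : comap f c ∈ Z2 Γ A := by
  obtain ⟨-, hvert, hcoc⟩ := hc
  refine ⟨fun x y h => if_neg h, fun x y h => ?_, fun x y z hxy hyz => ?_⟩
  · unfold comap
    split_ifs
    · exact hvert _ _ (h.imp hf.isVertex hf.isVertex)
    · rfl
  · simp only [comap, if_pos hxy, if_pos hyz, if_pos (composable_comp_left hxy hyz),
      if_pos (composable_comp_right_s9 hxy hyz), hf.map_comp _ _ hxy, hf.map_comp _ _ hyz]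
    exact hcoc _ _ _ (hf.composable hxy) (hf.composable hyz)

theorem comap_delta1 {f : Γ.M → Λ.M} (hf : IsFunctor Γ Λ f) (b : Λ.M → A) :
    comap f (Λ.delta1 b) = Γ.delta1 (b ∘ f) := by
  funext x y
  by_cases h : Γ.Composable x y
  · simp only [comap, delta1, if_pos h, if_pos (hf.composable h), hf.map_comp _ _ h,
      Function.comp]
  · simp only [comap, delta1, if_neg h]

theorem comap_mem_B2 {f : Γ.M → Λ.M} (hf : IsFunctor Γ Λ f) {c : Λ.M → Λ.M → A}
    (hc : c ∈ B2 Λ A) : comap f c ∈ B2 Γ A := by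
  obtain ⟨b, hb, rfl⟩ := hc
  exact ⟨b ∘ f, fun v hv => hb _ (hf.isVertex hv), comap_delta1 hf b⟩

theorem comap_add (f : Γ.M → Λ.M) (c d : Λ.M → Λ.M → A) :
    comap f (c + d) = comap f c + comap f d := by
  funext x y
  by_cases h : Γ.Composable x y <;> simp [comap, h]

theorem comap_comap {m : ℕ} {Δ : KGraph m} {f : Γ.M → Λ.M} {g : Δ.M → Γ.M}
    (hg : IsFunctor Δ Γ g) (c : Λ.M → Λ.M → A) :
    comap g (comap f c) = comap (f ∘ g) c := by
  funext x y
  by_cases h : Δ.Composable x y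
  · simp only [comap, if_pos h, if_pos (hg.composable h), Function.comp]
  · simp only [comap, if_neg h]

theorem comap_id {c : Λ.M → Λ.M → A} (hc : c ∈ Z2 Λ A) : comap id c = c := by
  funext x y
  by_cases h : Λ.Composable x y
  · exact if_pos h
  · rw [comap, if_neg h, hc.1 x y h]

theorem comap_sub_comap_mem_B2 {F G ξ : Γ.M → Λ.M} (hF : IsFunctor Γ Λ F)
    (hG : IsFunctor Γ Λ G) (hξ : IsNatTrans Γ Λ F G ξ) {c : Λ.M → Λ.M → A}
    (hc : c ∈ Z2 Λ A) : comap F c - comap G c ∈ B2 Γ A := by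
  obtain ⟨-, hvert, hcoc⟩ := hc
  refine ⟨fun z => c (ξ (Γ.rng z)) (F z) - c (G z) (ξ (Γ.src z)), fun v hv => ?_, ?_⟩
  · dsimp only
    rw [hvert _ _ (Or.inr (hF.isVertex hv)), hvert _ _ (Or.inl (hG.isVertex hv)), sub_zero]
  funext x y
  by_cases h : Γ.Composable x y
  swap
  · simp only [Pi.sub_apply, comap, delta1, if_neg h, sub_zero]
  have hξF (z : Γ.M) : Λ.Composable (ξ (Γ.rng z)) (F z) := by
    rw [Composable, hξ.src_app _ (Γ.isVertex_rng z), hF.map_rng]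
  have hGξ (z : Γ.M) : Λ.Composable (G z) (ξ (Γ.src z)) := by
    rw [Composable, hξ.rng_app _ (Γ.isVertex_src z), hG.map_src]
  have hnat_x : Λ.comp (ξ (Γ.rng x)) (F x) = Λ.comp (G x) (ξ (Γ.rng y)) :=
    h ▸ hξ.naturality x
  have h₁ := hcoc _ _ _ (hξF x) (hF.composable h)
  have h₂ := hcoc _ _ _ (h ▸ hGξ x) (hξF y)
  have h₃ := hcoc _ _ _ (hG.composable h) (hGξ y)
  rw [← hnat_x, hξ.naturality y] at h₂
  simp only [Pi.sub_apply, comap, delta1, if_pos h, Γ.rng_comp x y h, Γ.src_comp x y h,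
    hF.map_comp x y h, hG.map_comp x y h, show Γ.src x = Γ.rng y from h]
  linear_combination (norm := abel) h₂ - h₁ - h₃

variable (A)

noncomputable def comapZ2 {f : Γ.M → Λ.M} (hf : IsFunctor Γ Λ f) : Z2 Λ A →+ Z2 Γ A :=
  AddMonoidHom.mk' (fun c => ⟨comap f c, comap_mem_Z2 hf c.2⟩)
    (fun c d => Subtype.ext (comap_add f c.1 d.1))

theorem coe_comapZ2_apply {f : Γ.M → Λ.M} (hf : IsFunctor Γ Λ f) (c : Z2 Λ A) :
    (comapZ2 A hf c : Γ.M → Γ.M → A) = comap f c :=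
  rfl

noncomputable def H2comap {f : Γ.M → Λ.M} (hf : IsFunctor Γ Λ f) : H2 Λ A →+ H2 Γ A :=
  QuotientAddGroup.map _ _ (comapZ2 A hf) fun c hc => by
    rw [AddSubgroup.mem_comap, AddSubgroup.mem_addSubgroupOf, coe_comapZ2_apply] at *
    exact comap_mem_B2 hf hc

theorem H2comap_comp {m : ℕ} {Δ : KGraph m} {f : Γ.M → Λ.M} {g : Δ.M → Γ.M}
    (hf : IsFunctor Γ Λ f) (hg : IsFunctor Δ Γ g) :
    (H2comap A hg).comp (H2comap A hf) = H2comap A (hf.comp hg) :=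
  AddMonoidHom.ext fun x => QuotientAddGroup.induction_on x fun c =>
    congrArg QuotientAddGroup.mk (Subtype.ext (comap_comap (f := f) hg c.1))

theorem H2comap_id : H2comap A (IsFunctor.id Λ) = AddMonoidHom.id (H2 Λ A) :=
  AddMonoidHom.ext fun x => QuotientAddGroup.induction_on x fun c =>
    congrArg QuotientAddGroup.mk (Subtype.ext (comap_id c.2))

theorem H2comap_eq_of_isNatTrans {F G ξ : Γ.M → Λ.M} (hF : IsFunctor Γ Λ F)
    (hG : IsFunctor Γ Λ G) (hξ : IsNatTrans Γ Λ F G ξ) : H2comap A hF = H2comap A hG := by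
  refine AddMonoidHom.ext fun x => QuotientAddGroup.induction_on x fun c => ?_
  refine QuotientAddGroup.eq.mpr ((AddSubgroup.mem_addSubgroupOf).mpr ?_)
  rw [AddSubgroup.coe_add, AddSubgroup.coe_neg, coe_comapZ2_apply, coe_comapZ2_apply,
    neg_add_eq_sub, ← neg_sub]
  exact neg_mem (comap_sub_comap_mem_B2 hF hG hξ c.2)

noncomputable def H2equivOfDeformationRetract {ι : Γ.M → Λ.M} {π : Λ.M → Γ.M}
    {ξ : Λ.M → Λ.M} (hι : IsFunctor Γ Λ ι) (hπ : IsFunctor Λ Γ π) (hπι : π ∘ ι = id)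
    (hξ : IsNatTrans Λ Λ id (ι ∘ π) ξ) : H2 Λ A ≃+ H2 Γ A :=
  AddMonoidHom.toAddEquiv (H2comap A hι) (H2comap A hπ)
    (by rw [H2comap_comp, ← H2comap_eq_of_isNatTrans A (IsFunctor.id Λ) _ hξ, H2comap_id])
    (by rw [H2comap_comp]; convert H2comap_id A using 2)

end KGraph

namespace CovSeqLimit

open KGraph

variable {k : ℕ} (C : CovSeqLimit k)

theorem isFunctor_ι (n : ℕ) : IsFunctor (C.L n) C.Lam (C.ι n) :=
  ⟨C.ι_src n, C.ι_rng n, fun x y h => (C.ι_comp n x y h).symm⟩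

theorem isVertex_p (n : ℕ) {w : (C.L (n + 1)).M} (hw : (C.L (n + 1)).IsVertex w) :
    (C.L n).IsVertex (C.p n w) := by
  rw [IsVertex, (C.p_cov n).2.2.1, hw]

theorem exists_ι_eq_of_isVertex {v : C.Lam.M} (hv : C.Lam.IsVertex v) :
    ∃ n w, (C.L n).IsVertex w ∧ C.ι n w = v := by
  obtain ⟨n, w, rfl⟩ := C.ι_union v (by rw [← hv, C.Lam.deg_rng]; rfl)
  rw [IsVertex, C.ι_rng] at hv
  exact ⟨n, w, C.ι_inj n hv, rfl⟩

/-- The path `ξ_v` of edges from `v = ι n w` down to `ι 0 (p_{1,n} w)` in `Λ₁`. -/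
def xiLevel : (n : ℕ) → (C.L n).M → C.Lam.M
  | 0, w => C.ι 0 w
  | n + 1, w => C.Lam.comp (xiLevel n (C.p n w)) (C.edge ⟨n, w⟩)

theorem composable_xiLevel_edge (n : ℕ) {w : (C.L (n + 1)).M}
    (hw : (C.L (n + 1)).IsVertex w)
    (hsrc : C.Lam.src (C.xiLevel n (C.p n w)) = C.ι n (C.p n w)) :
    C.Lam.Composable (C.xiLevel n (C.p n w)) (C.edge ⟨n, w⟩) := by
  rw [Composable, hsrc, C.edge_rng n w hw]

theorem src_xiLevel : ∀ (n : ℕ) {w : (C.L n).M}, (C.L n).IsVertex w →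
    C.Lam.src (C.xiLevel n w) = C.ι n w
  | 0, _, hw => by rw [xiLevel, C.ι_src, hw.src_eq]
  | n + 1, w, hw => by
    rw [xiLevel, C.Lam.src_comp _ _ (C.composable_xiLevel_edge n hw
      (src_xiLevel n (C.isVertex_p n hw))), C.edge_src n w hw]

theorem rng_xiLevel : ∀ (n : ℕ) {w : (C.L n).M}, (C.L n).IsVertex w →
    C.Lam.rng (C.xiLevel n w) = C.ι 0 (C.pIter n w)
  | 0, _, hw => by rw [xiLevel, C.ι_rng, hw]; rfl
  | n + 1, w, hw => by
    rw [xiLevel, C.Lam.rng_comp _ _ (C.composable_xiLevel_edge n hw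
      (C.src_xiLevel n (C.isVertex_p n hw))), rng_xiLevel n (C.isVertex_p n hw)]
    rfl

/-- Peel off the last edge, which is determined by its source. -/
theorem eq_xiLevel_of_deg_eq : ∀ (j : ℕ) {m : ℕ} {w : (C.L m).M} {β : C.Lam.M},
    (C.L m).IsVertex w → C.Lam.deg β = Fin.snoc 0 j → C.Lam.src β = C.ι m w →
    C.Lam.rng β ∈ Set.range (C.ι 0) → β = C.xiLevel m w
  | 0, m, w, β, hw, hdeg, hsrc, ⟨u, hrng⟩ => by
    have hβ : C.Lam.IsVertex β := isVertex_of_deg_eq_zero (hdeg.trans Fin.snoc_zero_zero)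
    rw [hβ.src_eq] at hsrc
    rw [hβ, hsrc] at hrng
    obtain rfl : 0 = m := C.ι_disjoint _ _ _ _ hrng
    exact hsrc
  | j + 1, m, w, β, hw, hdeg, hsrc, hrng => by
    obtain ⟨⟨γ, e⟩, ⟨hγe, rfl, hγ, he⟩, -⟩ := C.Lam.factor β (Fin.snoc 0 j) (Fin.snoc 0 1)
      (by rw [hdeg, Fin.snoc_add_snoc, add_zero])
    obtain ⟨⟨a, v⟩, hv, rfl⟩ := C.edge_surj e he
    rw [C.Lam.src_comp _ _ hγe, C.edge_src a v hv] at hsrc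
    obtain rfl : a + 1 = m := C.ι_disjoint _ _ _ _ hsrc
    obtain rfl : v = w := C.ι_inj _ hsrc
    rw [C.Lam.rng_comp _ _ hγe] at hrng
    rw [eq_xiLevel_of_deg_eq j (C.isVertex_p a hw) hγ (hγe.trans (C.edge_rng a v hw)) hrng]
    rfl

/-- `ξ_v`, for `v` a vertex of `Λ` (junk value `v` elsewhere). -/
noncomputable def xi (v : C.Lam.M) : C.Lam.M :=
  if h : ∃ q : Σ n, (C.L n).M, C.ι q.1 q.2 = v then C.xiLevel h.choose.1 h.choose.2 else v

theorem xi_ι (n : ℕ) (w : (C.L n).M) : C.xi (C.ι n w) = C.xiLevel n w := by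
  have h : ∃ q : Σ n, (C.L n).M, C.ι q.1 q.2 = C.ι n w := ⟨⟨n, w⟩, rfl⟩
  have hrep : ∀ q : Σ n, (C.L n).M, C.ι q.1 q.2 = C.ι n w →
      C.xiLevel q.1 q.2 = C.xiLevel n w := by
    rintro ⟨m, u⟩ hmu
    obtain rfl : m = n := C.ι_disjoint m n u w hmu
    obtain rfl : u = w := C.ι_inj m hmu
    rfl
  rw [xi, dif_pos h]
  exact hrep _ h.choose_spec

theorem src_xi {v : C.Lam.M} (hv : C.Lam.IsVertex v) : C.Lam.src (C.xi v) = v := by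
  obtain ⟨n, w, hw, rfl⟩ := C.exists_ι_eq_of_isVertex hv
  rw [C.xi_ι, C.src_xiLevel n hw]

theorem rng_xi_mem_range {v : C.Lam.M} (hv : C.Lam.IsVertex v) :
    C.Lam.rng (C.xi v) ∈ Set.range (C.ι 0) := by
  obtain ⟨n, w, hw, rfl⟩ := C.exists_ι_eq_of_isVertex hv
  rw [C.xi_ι, C.rng_xiLevel n hw]
  exact ⟨_, rfl⟩

theorem composable_xi_rng (z : C.Lam.M) : C.Lam.Composable (C.xi (C.Lam.rng z)) z :=
  C.src_xi (C.Lam.isVertex_rng z)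

/-- Splitting `ξ_{r z} z` into its `ℕ^k`-part and its `ℕ e_{k+1}`-part, the first factor lies
in `Λ₁` (its range does) and the second is `ξ_{s z}` by `eq_xiLevel_of_deg_eq`. -/
theorem exists_xi_comp_eq (z : C.Lam.M) : ∃ y : (C.L 0).M,
    C.Lam.Composable (C.ι 0 y) (C.xi (C.Lam.src z)) ∧
    C.Lam.comp (C.xi (C.Lam.rng z)) z = C.Lam.comp (C.ι 0 y) (C.xi (C.Lam.src z)) := by
  set W := C.Lam.comp (C.xi (C.Lam.rng z)) z
  have hW := C.composable_xi_rng z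
  have hsplit : C.Lam.deg W = Fin.snoc (Fin.init (C.Lam.deg W)) 0
      + Fin.snoc 0 (C.Lam.deg W (Fin.last k)) := by
    rw [Fin.snoc_add_snoc, add_zero, zero_add, Fin.snoc_init_self]
  obtain ⟨⟨μ, ν⟩, ⟨hμν, hcomp, hμ, hν⟩, -⟩ := C.Lam.factor W _ _ hsplit
  dsimp only at hμν hcomp hμ hν
  obtain ⟨n, x, rfl⟩ := C.ι_union μ (by simp [hμ])
  obtain ⟨u, hu⟩ := C.rng_xi_mem_range (C.Lam.isVertex_rng z)
  have hrng : C.ι n ((C.L n).rng x) = C.ι 0 u := by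
    rw [← C.ι_rng, ← C.Lam.rng_comp _ _ hμν, hcomp, C.Lam.rng_comp _ _ hW, hu]
  obtain rfl : n = 0 := C.ι_disjoint _ _ _ _ hrng
  obtain ⟨m, w, hw, hmw⟩ := C.exists_ι_eq_of_isVertex (C.Lam.isVertex_src z)
  have hνξ : ν = C.xi (C.Lam.src z) := by
    rw [← hmw, C.xi_ι]
    refine C.eq_xiLevel_of_deg_eq _ hw hν ?_ ⟨(C.L 0).src x, by rw [← hμν, C.ι_src]⟩
    rw [← C.Lam.src_comp _ _ hμν, hcomp, C.Lam.src_comp _ _ hW, hmw]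
  exact ⟨x, hνξ ▸ hμν, hνξ ▸ hcomp.symm⟩

/-- The retraction `π : Λ → Λ₁`, characterised by `ξ_{r z} z = π(z) ξ_{s z}`. -/
noncomputable def proj (z : C.Lam.M) : (C.L 0).M := (C.exists_xi_comp_eq z).choose

theorem composable_ι_proj_xi (z : C.Lam.M) :
    C.Lam.Composable (C.ι 0 (C.proj z)) (C.xi (C.Lam.src z)) :=
  (C.exists_xi_comp_eq z).choose_spec.1

theorem xi_comp_eq_ι_proj_comp (z : C.Lam.M) :
    C.Lam.comp (C.xi (C.Lam.rng z)) z = C.Lam.comp (C.ι 0 (C.proj z)) (C.xi (C.Lam.src z)) :=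
  (C.exists_xi_comp_eq z).choose_spec.2

theorem proj_eq_of_xi_comp_eq {z : C.Lam.M} {y : (C.L 0).M}
    (hy : C.Lam.Composable (C.ι 0 y) (C.xi (C.Lam.src z)))
    (h : C.Lam.comp (C.xi (C.Lam.rng z)) z = C.Lam.comp (C.ι 0 y) (C.xi (C.Lam.src z))) :
    C.proj z = y :=
  C.ι_inj 0 (comp_right_cancel (C.composable_ι_proj_xi z) hy
    ((C.xi_comp_eq_ι_proj_comp z).symm.trans h))

theorem ι_proj_of_isVertex {v : C.Lam.M} (hv : C.Lam.IsVertex v) :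
    C.ι 0 (C.proj v) = C.Lam.rng (C.xi v) := by
  have hcomp : C.Lam.Composable (C.ι 0 (C.proj v)) (C.xi v) := by
    simpa only [hv.src_eq] using C.composable_ι_proj_xi v
  have hfix : C.Lam.comp (C.ι 0 (C.proj v)) (C.xi v) = C.xi v := by
    have h := C.xi_comp_eq_ι_proj_comp v
    have hid := C.Lam.comp_id (C.xi v)
    rw [hv.src_eq, hv] at h
    rw [C.src_xi hv] at hid
    rw [← h, hid]
  exact comp_right_cancel hcomp (C.Lam.src_rng _) (hfix.trans (C.Lam.id_comp _).symm)

theorem proj_ι (x : (C.L 0).M) : C.proj (C.ι 0 x) = x := by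
  have hxi : ∀ v, C.xi (C.ι 0 v) = C.ι 0 v := C.xi_ι 0
  refine C.proj_eq_of_xi_comp_eq ?_ ?_
  · rw [C.ι_src, hxi, ← C.ι_src]
    exact (C.Lam.rng_src _).symm
  · rw [C.ι_src, C.ι_rng, hxi, hxi, ← C.ι_src, ← C.ι_rng, C.Lam.id_comp, C.Lam.comp_id]

theorem src_proj (z : C.Lam.M) : (C.L 0).src (C.proj z) = C.proj (C.Lam.src z) :=
  C.ι_inj 0 <| by
    rw [← C.ι_src, C.ι_proj_of_isVertex (C.Lam.isVertex_src z)]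
    exact C.composable_ι_proj_xi z

theorem rng_proj (z : C.Lam.M) : (C.L 0).rng (C.proj z) = C.proj (C.Lam.rng z) :=
  C.ι_inj 0 <| by
    rw [← C.ι_rng, C.ι_proj_of_isVertex (C.Lam.isVertex_rng z),
      ← C.Lam.rng_comp _ _ (C.composable_ι_proj_xi z), ← C.xi_comp_eq_ι_proj_comp,
      C.Lam.rng_comp _ _ (C.composable_xi_rng z)]

theorem proj_comp {z z' : C.Lam.M} (h : C.Lam.Composable z z') :
    C.proj (C.Lam.comp z z') = (C.L 0).comp (C.proj z) (C.proj z') := by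
  have hproj : (C.L 0).Composable (C.proj z) (C.proj z') := by
    rw [Composable, C.src_proj, C.rng_proj, h]
  have hξz' : C.Lam.Composable (C.xi (C.Lam.src z)) z' :=
    (C.src_xi (C.Lam.isVertex_src z)).trans h
  refine C.proj_eq_of_xi_comp_eq ?_ ?_
  · rw [Composable, C.ι_src, (C.L 0).src_comp _ _ hproj, C.Lam.src_comp _ _ h, ← C.ι_src]
    exact C.composable_ι_proj_xi z'
  · calc C.Lam.comp (C.xi (C.Lam.rng (C.Lam.comp z z'))) (C.Lam.comp z z')
          = C.Lam.comp (C.Lam.comp (C.xi (C.Lam.rng z)) z) z' := by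
            rw [C.Lam.rng_comp _ _ h, C.Lam.comp_assoc _ _ _ (C.composable_xi_rng z) h]
        _ = C.Lam.comp (C.ι 0 (C.proj z)) (C.Lam.comp (C.xi (C.Lam.src z)) z') := by
            rw [C.xi_comp_eq_ι_proj_comp, C.Lam.comp_assoc _ _ _ (C.composable_ι_proj_xi z) hξz']
        _ = C.Lam.comp (C.ι 0 (C.proj z))
              (C.Lam.comp (C.ι 0 (C.proj z')) (C.xi (C.Lam.src z'))) := by
            rw [show C.Lam.src z = C.Lam.rng z' from h, C.xi_comp_eq_ι_proj_comp]
        _ = C.Lam.comp (C.ι 0 ((C.L 0).comp (C.proj z) (C.proj z')))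
              (C.xi (C.Lam.src (C.Lam.comp z z'))) := by
            rw [← C.Lam.comp_assoc _ _ _ ((C.isFunctor_ι 0).composable hproj)
              (C.composable_ι_proj_xi z'), C.ι_comp 0 _ _ hproj, C.Lam.src_comp _ _ h]

theorem isFunctor_proj : IsFunctor C.Lam (C.L 0) C.proj :=
  ⟨fun z => C.src_proj z, fun z => C.rng_proj z, fun _ _ h => C.proj_comp h⟩

theorem proj_comp_ι : C.proj ∘ C.ι 0 = id :=
  funext C.proj_ι

theorem isNatTrans_xi : IsNatTrans C.Lam C.Lam id (C.ι 0 ∘ C.proj) C.xi :=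
  ⟨fun _ hv => C.src_xi hv, fun _ hv => (C.ι_proj_of_isVertex hv).symm,
    C.xi_comp_eq_ι_proj_comp⟩

theorem res_eq_comap {A : Type*} [AddCommGroup A] {c : C.Lam.M → C.Lam.M → A}
    (hc : ∀ x y, ¬C.Lam.Composable x y → c x y = 0) : C.res c = comap (C.ι 0) c :=
  (comap_eq_of_injective (C.isFunctor_ι 0) (C.ι_inj 0) hc).symm

end CovSeqLimit

open KGraph in
/-- The restriction map `c ↦ c|_{Λ₁}` maps `Z²(Λ,A)` to `Z²(Λ₁,A)`
and `B²(Λ,A)` into `B²(Λ₁,A)`, and induces an isomorphism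
`H²(Λ, A) ≅ H²(Λ₁, A)`. -/
theorem restriction_induces_H2_iso {k : ℕ} (C : CovSeqLimit k)
    (A : Type*) [AddCommGroup A] :
    (∀ c ∈ Z2 C.Lam A, C.res c ∈ Z2 (C.L 0) A) ∧
    (∀ c ∈ B2 C.Lam A, C.res c ∈ B2 (C.L 0) A) ∧
    ∃ φ : H2 C.Lam A ≃+ H2 (C.L 0) A,
      ∀ (c : C.Lam.M → C.Lam.M → A) (hc : c ∈ Z2 C.Lam A)
        (hc' : C.res c ∈ Z2 (C.L 0) A),
        φ (QuotientAddGroup.mk ⟨c, hc⟩) = QuotientAddGroup.mk ⟨C.res c, hc'⟩ := by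
  refine ⟨fun c hc => ?_, fun c hc => ?_,
    H2equivOfDeformationRetract A (C.isFunctor_ι 0) C.isFunctor_proj C.proj_comp_ι
      C.isNatTrans_xi, fun c hc hc' => ?_⟩
  · rw [C.res_eq_comap hc.1]
    exact comap_mem_Z2 (C.isFunctor_ι 0) hc
  · obtain ⟨b, hb, rfl⟩ := hc
    rw [C.res_eq_comap (c := C.Lam.delta1 b) fun x y h => if_neg h]
    exact comap_mem_B2 (C.isFunctor_ι 0) ⟨b, hb, rfl⟩
  · exact congrArg QuotientAddGroup.mk (Subtype.ext (C.res_eq_comap hc.1).symm)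
end
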